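/- arXiv:1401.3581 — 3 statements merged into one kernel-verified Lean document; each statement's English description precedes it below -/
import Mathlib

section
/- Let K be a closed convex cone in R^m and H a linear subspace of R^m. Then the following are equivalent: (1) H is invariant under the lattice-like operations of K (i.e., for all x, y in H, x - P_K(x-y) ∈ H and x + P_K(y-x) ∈ H); (2) P_K(H) ⊆ H; (3) P_H(K) ⊆ K. -/
open scoped RealInnerProductSpace

/-- `p` is the metric projection (nearest point) of `x` onto the set `D`. -/
def IsProjection {E : Type*} [NormedAddCommGroup E] (D : Set E) (x p : E) : Prop :=
  p ∈ D ∧ ∀ z ∈ D, dist x p ≤ dist x z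

section Projection

variable {E : Type*} [NormedAddCommGroup E]

theorem exists_isProjection [ProperSpace E] {D : Set E} (hD : IsClosed D) (hne : D.Nonempty)
    (x : E) : ∃ p, IsProjection D x p := by
  obtain ⟨p, hp, hdist⟩ := hD.exists_infDist_eq_dist hne x
  exact ⟨p, hp, fun z hz => hdist ▸ Metric.infDist_le_dist_of_mem hz⟩

/-- `x - P_D (x - y)` and `x + P_D (y - x)` are the lattice-like operations `x ⊓ y`, `x ⊔ y`;
for `→` take `y = 0`. -/
theorem latticeLike_closed_iff_isProjection_mem (D : Set E) (H : AddSubgroup E) :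
    (∀ x ∈ H, ∀ y ∈ H,
        (∀ p, IsProjection D (x - y) p → x - p ∈ H) ∧
        (∀ q, IsProjection D (y - x) q → x + q ∈ H)) ↔
      ∀ x ∈ H, ∀ p, IsProjection D x p → p ∈ H := by
  constructor
  · intro h x hx p hp
    have hxp : x - p ∈ H := (h x hx 0 H.zero_mem).1 p (by rwa [sub_zero])
    simpa using H.sub_mem hx hxp
  · intro h x hx y hy
    exact ⟨fun p hp => H.sub_mem hx (h _ (H.sub_mem hx hy) p hp),
      fun q hq => H.add_mem hx (h _ (H.sub_mem hy hx) q hq)⟩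

variable [InnerProductSpace ℝ E]

theorem isProjection_iff_inner_le {D : Set E} (hD : Convex ℝ D) (x p : E) :
    IsProjection D x p ↔ p ∈ D ∧ ∀ w ∈ D, ⟪x - p, w - p⟫ ≤ 0 := by
  have hbdd : BddBelow (Set.range fun w : D => ‖x - (w : E)‖) :=
    ⟨0, by rintro _ ⟨w, rfl⟩; exact norm_nonneg _⟩
  refine and_congr_right fun hp => ?_
  have : Nonempty D := ⟨⟨p, hp⟩⟩
  rw [← norm_eq_iInf_iff_real_inner_le_zero hD hp]
  constructor
  · intro hmin
    refine le_antisymm (le_ciInf fun w => ?_) (ciInf_le hbdd ⟨p, hp⟩)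
    simpa [dist_eq_norm] using hmin w w.2
  · intro h z hz
    simpa [dist_eq_norm, h] using ciInf_le hbdd ⟨z, hz⟩

theorem IsProjection.unique {D : Set E} (hD : Convex ℝ D) {x p q : E}
    (hp : IsProjection D x p) (hq : IsProjection D x q) : p = q := by
  rw [isProjection_iff_inner_le hD] at hp hq
  have h := add_nonpos (hp.2 q hq.1) (hq.2 p hp.1)
  have hself : ⟪q - p, q - p⟫ ≤ 0 := by
    have e : ⟪q - p, q - p⟫ = ⟪x - p, q - p⟫ + ⟪x - q, p - q⟫ := by
      simp only [inner_sub_left, inner_sub_right]; ring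
    rwa [e]
  exact (sub_eq_zero.mp (real_inner_self_nonpos.mp hself)).symm

end Projection

section Cone

variable {E : Type*} [NormedAddCommGroup E] [InnerProductSpace ℝ E] {K : PointedCone ℝ E}
  {x p : E}

/-- Testing the variational inequality with `0` and `2 • p` gives both signs. -/
theorem IsProjection.inner_sub_self_eq_zero (h : IsProjection K x p) : ⟪x - p, p⟫ = 0 := by
  have hvar := ((isProjection_iff_inner_le K.convex x p).mp h).2
  have h0 := hvar 0 K.zero_mem
  have h2 := hvar _ (K.smul_mem zero_le_two h.1)
  rw [zero_sub, inner_neg_right] at h0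
  rw [two_smul, add_sub_cancel_right] at h2
  linarith

theorem IsProjection.inner_sub_nonpos (h : IsProjection K x p) {u : E} (hu : u ∈ K) :
    ⟪x - p, u⟫ ≤ 0 := by
  simpa using ((isProjection_iff_inner_le K.convex x p).mp h).2 _ (K.add_mem hu h.1)

end Cone

section Subspace

variable {E : Type*} [NormedAddCommGroup E] [InnerProductSpace ℝ E]
  (H : Submodule ℝ E) [H.HasOrthogonalProjection]

/-- If the cone projection `p` of `x = P_H u`, `u ∈ K`, lies in `H`, then
`‖x - p‖² = ⟪x - p, u⟫ - ⟪x - p, u - x⟫ - ⟪x - p, p⟫ ≤ 0`, since `u - x ⊥ H ∋ x - p`. -/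
theorem starProjection_eq_of_isProjection {K : PointedCone ℝ E} {u p : E} (hu : u ∈ K)
    (hp : IsProjection K (H.starProjection u) p) (hpH : p ∈ H) : H.starProjection u = p := by
  set x := H.starProjection u
  have horth : ⟪x - p, u - x⟫ = 0 :=
    H.sub_starProjection_mem_orthogonal u _ (H.sub_mem (H.starProjection_apply_mem u) hpH)
  have hself : ⟪x - p, x - p⟫ ≤ 0 := by
    have e : ⟪x - p, x - p⟫ = ⟪x - p, u⟫ - ⟪x - p, u - x⟫ - ⟪x - p, p⟫ := by
      simp only [inner_sub_right]; ring
    rw [e, horth, hp.inner_sub_self_eq_zero]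
    linarith [hp.inner_sub_nonpos hu]
  exact sub_eq_zero.mp (real_inner_self_nonpos.mp hself)

variable {H}

/-- `P_H` is `1`-Lipschitz and fixes `x ∈ H`, so it does not move `p` away from `x`. -/
theorem IsProjection.starProjection {D : Set E} {x p : E} (hp : IsProjection D x p) (hx : x ∈ H)
    (hD : H.starProjection p ∈ D) : IsProjection D x (H.starProjection p) := by
  refine ⟨hD, fun z hz => le_trans ?_ (hp.2 z hz)⟩
  calc dist x (H.starProjection p) = ‖H.starProjection (x - p)‖ := by
        rw [map_sub, H.starProjection_eq_self_iff.mpr hx, dist_eq_norm]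
    _ ≤ ‖x - p‖ := H.norm_starProjection_apply_le _
    _ = dist x p := (dist_eq_norm _ _).symm

theorem isProjection_mem_of_starProjection_mem {D : Set E} (hD : Convex ℝ D)
    (hDH : ∀ u ∈ D, H.starProjection u ∈ D) {x p : E} (hx : x ∈ H) (hp : IsProjection D x p) :
    p ∈ H := by
  rw [hp.unique hD (hp.starProjection hx (hDH p hp.1))]
  exact H.starProjection_apply_mem p

end Subspace

/-- For a closed convex cone `K` and a linear subspace `H` of `ℝ^m`, the following
are equivalent: (1) `H` is invariant under the lattice-like operations of `K`;
(2) `P_K(H) ⊆ H`; (3) `P_H(K) ⊆ K`. -/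
theorem subspace_latticeLike_characterization {m : ℕ}
    (K : Set (EuclideanSpace ℝ (Fin m)))
    (hne : K.Nonempty) (hcl : IsClosed K)
    (hadd : ∀ u ∈ K, ∀ v ∈ K, u + v ∈ K)
    (hsmul : ∀ t : ℝ, 0 ≤ t → ∀ u ∈ K, t • u ∈ K)
    (H : Submodule ℝ (EuclideanSpace ℝ (Fin m))) :
    ((∀ x ∈ H, ∀ y ∈ H,
        (∀ p, IsProjection K (x - y) p → x - p ∈ H) ∧
        (∀ q, IsProjection K (y - x) q → x + q ∈ H)) ↔
      (∀ x ∈ H, ∀ p, IsProjection K x p → p ∈ H)) ∧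
    ((∀ x ∈ H, ∀ p, IsProjection K x p → p ∈ H) ↔
      (∀ x ∈ K, (Submodule.orthogonalProjection H x : EuclideanSpace ℝ (Fin m)) ∈ K)) := by
  obtain ⟨u₀, hu₀⟩ := hne
  let C : PointedCone ℝ (EuclideanSpace ℝ (Fin m)) :=
    { carrier := K
      add_mem' := fun hu hv => hadd _ hu _ hv
      zero_mem' := by simpa using hsmul 0 le_rfl u₀ hu₀
      smul_mem' := fun c _ hu => hsmul c c.2 _ hu }
  refine ⟨latticeLike_closed_iff_isProjection_mem K H.toAddSubgroup, fun h u hu => ?_,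
    fun h x hx p hp => isProjection_mem_of_starProjection_mem C.convex h hx hp⟩
  obtain ⟨p, hp⟩ := exists_isProjection hcl ⟨u₀, hu₀⟩ (H.starProjection u)
  have hpH : p ∈ H := h _ (H.starProjection_apply_mem u) p hp
  change H.starProjection u ∈ K
  rw [starProjection_eq_of_isProjection (K := C) H hu hp hpH]
  exact hp.1
end

section
/- Let K be a closed convex cone in R^m, H a subspace with P_H(K) ⊆ K, and G a subspace of H. Then P_G(K ∩ H) ⊆ K ∩ H if and only if P_G(K) ⊆ K. -/
/-! Since `G ≤ H`, `P_G = P_G ∘ P_H`, and `P_H` carries `K` into `K ∩ H`; so `P_G` maps `K`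
into `K` as soon as it maps `K ∩ H` into `K ∩ H`. -/

open Set

namespace Submodule

variable {𝕜 E : Type*} [RCLike 𝕜] [NormedAddCommGroup E] [InnerProductSpace 𝕜 E]
  {G H : Submodule 𝕜 E} [G.HasOrthogonalProjection] {K : Set E}

theorem mapsTo_starProjection_inter (hGH : G ≤ H) (hG : MapsTo G.starProjection K K) :
    MapsTo G.starProjection (K ∩ H) (K ∩ H) :=
  fun x hx => ⟨hG hx.1, hGH (G.starProjection_apply_mem x)⟩

theorem mapsTo_starProjection_of_inter [H.HasOrthogonalProjection] (hGH : G ≤ H)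
    (hH : MapsTo H.starProjection K K)
    (hG : MapsTo G.starProjection (K ∩ H) (K ∩ H)) : MapsTo G.starProjection K K := by
  intro x hx
  have hPx : H.starProjection x ∈ K ∩ H := ⟨hH hx, H.starProjection_apply_mem x⟩
  simpa only [← ContinuousLinearMap.comp_apply, starProjection_comp_starProjection_of_le hGH]
    using (hG hPx).1

theorem mapsTo_starProjection_inter_iff [H.HasOrthogonalProjection] (hGH : G ≤ H)
    (hH : MapsTo H.starProjection K K) :
    MapsTo G.starProjection (K ∩ H) (K ∩ H) ↔ MapsTo G.starProjection K K :=
  ⟨mapsTo_starProjection_of_inter hGH hH, mapsTo_starProjection_inter hGH⟩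

end Submodule

theorem latticeLike_subspace_transfer_general {m : ℕ}
    (K : Set (EuclideanSpace ℝ (Fin m)))
    (G H : Submodule ℝ (EuclideanSpace ℝ (Fin m))) (hGH : G ≤ H)
    (hH : ∀ x ∈ K, (H.orthogonalProjectionOnto x : EuclideanSpace ℝ (Fin m)) ∈ K) :
    (∀ x ∈ K ∩ (H : Set (EuclideanSpace ℝ (Fin m))),
        (G.orthogonalProjectionOnto x : EuclideanSpace ℝ (Fin m)) ∈
          K ∩ (H : Set (EuclideanSpace ℝ (Fin m)))) ↔
      (∀ x ∈ K, (G.orthogonalProjectionOnto x : EuclideanSpace ℝ (Fin m)) ∈ K) :=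
  Submodule.mapsTo_starProjection_inter_iff hGH hH

/-- Let `K` be a closed convex cone, `H` a subspace with `P_H(K) ⊆ K`, and `G ⊆ H`
a subspace. Then `P_G(K ∩ H) ⊆ K ∩ H` iff `P_G(K) ⊆ K`. -/
theorem latticeLike_subspace_transfer {m : ℕ}
    (K : Set (EuclideanSpace ℝ (Fin m)))
    (hne : K.Nonempty) (hcl : IsClosed K)
    (hadd : ∀ u ∈ K, ∀ v ∈ K, u + v ∈ K)
    (hsmul : ∀ t : ℝ, 0 ≤ t → ∀ u ∈ K, t • u ∈ K)
    (G H : Submodule ℝ (EuclideanSpace ℝ (Fin m))) (hGH : G ≤ H)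
    (hH : ∀ x ∈ K, (H.orthogonalProjectionOnto x : EuclideanSpace ℝ (Fin m)) ∈ K) :
    (∀ x ∈ K ∩ (H : Set (EuclideanSpace ℝ (Fin m))),
        (G.orthogonalProjectionOnto x : EuclideanSpace ℝ (Fin m)) ∈
          K ∩ (H : Set (EuclideanSpace ℝ (Fin m)))) ↔
      (∀ x ∈ K, (G.orthogonalProjectionOnto x : EuclideanSpace ℝ (Fin m)) ∈ K) :=
  latticeLike_subspace_transfer_general K G H hGH hH
end

section
/- Let V be a Euclidean Jordan algebra with Jordan frame {c_1,...,c_r} and V_r = span{c_1,...,c_r}. Then the cone of squares of V intersected with V_r equals the cone generated by the frame: Q ∩ V_r = {Σ λ_i c_i : λ_i ≥ 0}. -/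
open scoped RealInnerProductSpace

/-- A Euclidean Jordan algebra structure on a real inner product space `V`:
a commutative bilinear product satisfying the Jordan identity, for which the
inner product is associative, together with a unit element. -/
structure EJA (V : Type*) [NormedAddCommGroup V] [InnerProductSpace ℝ V] where
  mul : V →ₗ[ℝ] V →ₗ[ℝ] V
  comm : ∀ x y : V, mul x y = mul y x
  jordan : ∀ x y : V, mul x (mul (mul x x) y) = mul (mul x x) (mul x y)
  assoc_inner : ∀ x y z : V, ⟪mul x y, z⟫ = ⟪y, mul x z⟫
  one : V
  one_mul : ∀ x : V, mul one x = x

variable {V : Type*} [NormedAddCommGroup V] [InnerProductSpace ℝ V]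

/-- The cone of squares of a Euclidean Jordan algebra. -/
def EJA.coneOfSquares (J : EJA V) : Set V := {x | ∃ y, x = J.mul y y}

/-- An idempotent element. -/
def EJA.IsIdem (J : EJA V) (c : V) : Prop := J.mul c c = c

/-- A primitive idempotent: a nonzero idempotent which is not the sum of two
nonzero orthogonal idempotents. -/
def EJA.IsPrimitiveIdem (J : EJA V) (c : V) : Prop :=
  J.IsIdem c ∧ c ≠ 0 ∧
    ∀ u v : V, J.IsIdem u → J.IsIdem v → J.mul u v = 0 → c = u + v → u = 0 ∨ v = 0

/-- A Jordan frame: a complete system of mutually orthogonal primitive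
idempotents summing to the unit. -/
def EJA.IsJordanFrame (J : EJA V) {r : ℕ} (c : Fin r → V) : Prop :=
  (∀ i, J.IsPrimitiveIdem (c i)) ∧
    (∀ i j, i ≠ j → J.mul (c i) (c j) = 0) ∧ (∑ i, c i) = J.one

/-- An ideal of a Euclidean Jordan algebra. -/
def EJA.IsIdeal (J : EJA V) (I : Submodule ℝ V) : Prop :=
  ∀ x ∈ I, ∀ y : V, J.mul x y ∈ I

/-- A simple Euclidean Jordan algebra: nontrivial and with no nontrivial ideal. -/
def EJA.IsSimple (J : EJA V) : Prop :=
  (⊤ : Submodule ℝ V) ≠ ⊥ ∧ ∀ I : Submodule ℝ V, J.IsIdeal I → I = ⊥ ∨ I = ⊤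

/-!
For an idempotent `c`, the Jordan identity linearised at `c` gives the Peirce relation
`L_c (2 L_c - 1) (L_c - 1) = 0` for the multiplication operator `L_c`, which is symmetric because
the inner product is associative. Hence `⟪y², c⟫ = ⟪L_c y, y⟫ ≥ 0` for every `y`, so a square
`∑ μᵢ cᵢ` in the span of a frame has `μᵢ ‖cᵢ‖² = ⟪∑ μⱼ cⱼ, cᵢ⟫ ≥ 0`. Conversely `∑ λᵢ cᵢ` is the
square of `∑ √λᵢ cᵢ`.
-/

/-- Since `t = t² + 4 (t - t²)²` modulo `t (2t - 1) (t - 1)`. -/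
lemma LinearMap.IsSymmetric.inner_map_self_eq_of_peirce {E : Type*} [NormedAddCommGroup E]
    [InnerProductSpace ℝ E] {T : E →ₗ[ℝ] E} (hT : T.IsSymmetric)
    (hpeirce : ∀ z, (2 : ℝ) • T (T (T z)) = (3 : ℝ) • T (T z) - T z) (y : E) :
    ⟪T y, y⟫ = ‖T y‖ ^ 2 + 4 * ‖T y - T (T y)‖ ^ 2 := by
  have e1 := congrArg (⟪·, y⟫) (hpeirce y)
  have e2 := congrArg (⟪·, T y⟫) (hpeirce y)
  simp only [inner_sub_left, real_inner_smul_left, hT (T (T y)), hT (T y) y] at e1 e2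
  rw [norm_sub_sq_real, ← real_inner_self_eq_norm_sq, ← real_inner_self_eq_norm_sq,
    real_inner_comm (T (T y))] at *
  linarith

namespace EJA

variable (J : EJA V)

lemma isSymmetric_mul (x : V) : (J.mul x).IsSymmetric := J.assoc_inner x

lemma mul_idem_peirce {c : V} (hc : J.IsIdem c) (z : V) :
    (2 : ℝ) • J.mul c (J.mul c (J.mul c z)) =
      (3 : ℝ) • J.mul c (J.mul c z) - J.mul c z := by
  unfold IsIdem at hc
  have h1 := J.jordan (c + z) c
  have h2 := J.jordan (c - z) c
  have h4 := J.jordan z c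
  simp only [map_add, map_sub, LinearMap.add_apply, LinearMap.sub_apply, hc,
    J.comm z c, J.comm (J.mul c z) c, J.comm (J.mul z z) c,
    J.comm (J.mul z z) (J.mul c z)] at h1 h2 h4
  linear_combination (norm := module) (1/2 : ℝ) • h1 - (1/2 : ℝ) • h2 - h4

lemma inner_mul_self_idem_nonneg {c : V} (hc : J.IsIdem c) (y : V) :
    0 ≤ ⟪J.mul y y, c⟫ := by
  rw [J.assoc_inner, J.comm, real_inner_comm,
    (J.isSymmetric_mul c).inner_map_self_eq_of_peirce (J.mul_idem_peirce hc) y]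
  positivity

lemma inner_eq_zero_of_mul_eq_zero {a b : V} (ha : J.IsIdem a) (hab : J.mul a b = 0) :
    ⟪a, b⟫ = 0 := by
  rw [← ha, J.assoc_inner, hab, inner_zero_right]

section OrthogonalIdempotents

variable {ι : Type*} [Fintype ι] {c : ι → V} (hidem : ∀ i, J.IsIdem (c i))
  (horth : Pairwise fun i j ↦ J.mul (c i) (c j) = 0)
include hidem horth

lemma inner_sum_smul_orthogonal_idem (μ : ι → ℝ) (i : ι) :
    ⟪∑ j, μ j • c j, c i⟫ = μ i * ‖c i‖ ^ 2 := by
  rw [sum_inner, Fintype.sum_eq_single i, real_inner_smul_left, real_inner_self_eq_norm_sq]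
  intro j hj
  rw [real_inner_smul_left, J.inner_eq_zero_of_mul_eq_zero (hidem j) (horth hj), mul_zero]

lemma mul_self_sum_smul_orthogonal_idem (μ : ι → ℝ) :
    J.mul (∑ i, μ i • c i) (∑ i, μ i • c i) = ∑ i, (μ i * μ i) • c i := by
  simp only [map_sum, map_smul, LinearMap.sum_apply, LinearMap.smul_apply, Finset.smul_sum,
    smul_smul]
  refine Finset.sum_congr rfl fun i _ ↦ ?_
  rw [Fintype.sum_eq_single i fun j hj ↦ by rw [horth hj, smul_zero], hidem i]

end OrthogonalIdempotents

end EJA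

theorem coneOfSquares_inter_span_frame_general
    {V : Type*} [NormedAddCommGroup V] [InnerProductSpace ℝ V]
    (J : EJA V)
    {r : ℕ} (c : Fin r → V) (hc : J.IsJordanFrame c) :
    J.coneOfSquares ∩ (Submodule.span ℝ (Set.range c) : Set V) =
      {x | ∃ lam : Fin r → ℝ, (∀ i, 0 ≤ lam i) ∧ x = ∑ i, lam i • c i} := by
  obtain ⟨hprim, horth, -⟩ := hc
  have hidem i : J.IsIdem (c i) := (hprim i).1
  ext x
  constructor
  · rintro ⟨⟨y, rfl⟩, hx⟩
    obtain ⟨μ, hμ⟩ := (Submodule.mem_span_range_iff_exists_fun ℝ).mp hx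
    refine ⟨μ, fun i ↦ ?_, hμ.symm⟩
    have hsq := J.inner_mul_self_idem_nonneg (hidem i) y
    rw [← hμ, J.inner_sum_smul_orthogonal_idem hidem horth] at hsq
    exact nonneg_of_mul_nonneg_left hsq (pow_pos (norm_pos_iff.mpr (hprim i).2.1) 2)
  · rintro ⟨lam, hlam, rfl⟩
    refine ⟨⟨∑ i, √(lam i) • c i, ?_⟩,
      (Submodule.mem_span_range_iff_exists_fun ℝ).mpr ⟨lam, rfl⟩⟩
    simp only [J.mul_self_sum_smul_orthogonal_idem hidem horth, Real.mul_self_sqrt (hlam _)]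

/-- For a Jordan frame `{c₁,…,c_r}`, the cone of squares intersected with
`V_r = span{c₁,…,c_r}` is the cone generated by the frame. -/
theorem coneOfSquares_inter_span_frame
    {V : Type*} [NormedAddCommGroup V] [InnerProductSpace ℝ V]
    [FiniteDimensional ℝ V] (J : EJA V)
    {r : ℕ} (c : Fin r → V) (hc : J.IsJordanFrame c) :
    J.coneOfSquares ∩ (Submodule.span ℝ (Set.range c) : Set V) =
      {x | ∃ lam : Fin r → ℝ, (∀ i, 0 ≤ lam i) ∧ x = ∑ i, lam i • c i} :=
  coneOfSquares_inter_span_frame_general J c hc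
end
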